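/- Let Ω ⊆ ℂ be a domain whose complement contains at least two points and with nonempty boundary. Suppose there exist constants M > 0 and δ₀ ∈ (0, 1/e) such that for every z ∈ Ω with δ_Ω(z) < δ₀ one has ρ_Ω(z) ≥ M / (δ_Ω(z)·log log(1/δ_Ω(z))), i.e. every holomorphic f : 𝔻 → Ω with f(0) = z satisfies 2/|f′(0)| ≥ M/(δ_Ω(z)·log log(1/δ_Ω(z))). Then there exists β > 0 such that ∂Ω satisfies condition (U)_{2,β}. -/

import Mathlib

/-!
If the closed annulus `ε ≤ |z - a| ≤ r` around a boundary point `a` misses `∂Ω`, it is connected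
and so lies either in `Ω` or outside `closure Ω`; in the second case the connected set `Ω` would be
trapped in the disc `|z - a| < ε`, too small for a fixed disc inside `Ω` once `r` is small. So the
annulus lies in `Ω`. With `ε = s e^{-h}`, `r = s e^h` it contains the image of the unit disc under
`w ↦ a + s exp (i (2h/π) log ((1 + w) / (1 - w)))`, which sends `0` to `a + s` with derivative of
modulus `4hs/π`, while `s/2 ≤ δ_Ω(a + s) ≤ s` and so `log log (1/δ_Ω(a + s)) ≤ 2 log log (1/r)`.
For `e^{2h} = (log (1/r))^β` the density hypothesis gives
`2βs log log (1/r) / π ≤ 4s log log (1/r) / M`, i.e. `β ≤ 2π/M`. Hence every `β > 2π/M` works.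
-/

open Metric Set

def CondU2 (E : Set ℂ) (β : ℝ) : Prop :=
  ∃ C > (0 : ℝ), ∃ r₀ > (0 : ℝ), ∀ a ∈ E, ∀ r ∈ Set.Ioo (0 : ℝ) r₀,
    ({z : ℂ | C * r * (Real.log (1 / r)) ^ (-β) ≤ dist z a ∧ dist z a ≤ r} ∩ E).Nonempty

open scoped Real

/-- `ρ_Ω(z) ≥ M / (δ_Ω(z) log log (1 / δ_Ω(z)))` whenever `δ_Ω(z) < δ₀`, unfolded through the
infimum defining `ρ_Ω`. -/
def PoincareDensityLowerBound (Ω : Set ℂ) (M δ₀ : ℝ) : Prop :=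
  ∀ z ∈ Ω, infDist z (frontier Ω) < δ₀ →
    ∀ f : ℂ → ℂ, DifferentiableOn ℂ f (ball (0 : ℂ) 1) → MapsTo f (ball (0 : ℂ) 1) Ω → f 0 = z →
      ‖deriv f 0‖ ≤
        (2 / M) * infDist z (frontier Ω) * Real.log (Real.log (1 / infDist z (frontier Ω)))

def closedAnnulus {α : Type*} [PseudoMetricSpace α] (a : α) (ε r : ℝ) : Set α :=
  {z | ε ≤ dist z a ∧ dist z a ≤ r}

namespace Complex

theorem re_one_add_div_one_sub_pos {w : ℂ} (hw : ‖w‖ < 1) : 0 < ((1 + w) / (1 - w)).re := by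
  have hne : 1 - w ≠ 0 := fun h => by simp [← sub_eq_zero.mp h] at hw
  have hsq : w.re ^ 2 + w.im ^ 2 < 1 := by
    rw [← sq_lt_one_iff₀ (norm_nonneg w), ← normSq_eq_norm_sq, normSq_apply] at hw
    nlinarith
  rw [div_re, ← add_div]
  refine div_pos ?_ (normSq_pos.mpr hne)
  simp only [add_re, one_re, sub_re, add_im, one_im, sub_im]
  nlinarith

/- `w ↦ log ((1 + w) / (1 - w))` maps the unit disc onto the strip `|Im| < π / 2`; the exponential
wraps the rescaled strip `|Re| < h` around the annulus `s e^{-h} < |z - a| < s e^h`. -/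
noncomputable def discToAnnulus (a : ℂ) (s h : ℝ) (w : ℂ) : ℂ :=
  a + s * exp (I * (2 * h / π : ℝ) * log ((1 + w) / (1 - w)))

theorem differentiableOn_discToAnnulus (a : ℂ) (s h : ℝ) :
    DifferentiableOn ℂ (discToAnnulus a s h) (ball 0 1) := by
  intro w hw
  have hw1 : ‖w‖ < 1 := mem_ball_zero_iff.mp hw
  have hne : 1 - w ≠ 0 := fun h => by simp [← sub_eq_zero.mp h] at hw1
  have hlog : DifferentiableAt ℂ (fun w : ℂ => log ((1 + w) / (1 - w))) w :=
    ((differentiableAt_id.const_add 1).div (differentiableAt_id.const_sub 1) hne).clog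
      (Or.inl (re_one_add_div_one_sub_pos hw1))
  exact (((hlog.const_mul _).cexp.const_mul _).const_add _).differentiableWithinAt

theorem discToAnnulus_zero (a : ℂ) (s h : ℝ) : discToAnnulus a s h 0 = a + s := by
  simp [discToAnnulus]

theorem norm_deriv_discToAnnulus_zero (a : ℂ) {s h : ℝ} (hs : 0 ≤ s) (hh : 0 ≤ h) :
    ‖deriv (discToAnnulus a s h) 0‖ = 4 * h * s / π := by
  have hcayley : HasDerivAt (fun w : ℂ => (1 + w) / (1 - w)) 2 0 := by
    have := ((hasDerivAt_id (0 : ℂ)).const_add 1).div ((hasDerivAt_id (0 : ℂ)).const_sub 1)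
      (by norm_num)
    exact this.congr_deriv (by norm_num)
  have hlog := (hasDerivAt_log (by norm_num [slitPlane])).comp 0 hcayley
  have hf : HasDerivAt (discToAnnulus a s h) _ 0 :=
    ((hlog.const_mul (I * (2 * h / π : ℝ))).cexp.const_mul (s : ℂ)).const_add a
  rw [hf.deriv]
  simp only [Function.comp, add_zero, sub_zero, div_one, log_one, mul_zero, exp_zero,
    inv_one, one_mul, norm_mul, norm_I, norm_real, Real.norm_of_nonneg hs, Real.norm_of_nonneg
    (by positivity : 0 ≤ 2 * h / π), Complex.norm_two]
  ring

theorem dist_discToAnnulus (a : ℂ) {s : ℝ} (hs : 0 ≤ s) (h : ℝ) (w : ℂ) :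
    dist (discToAnnulus a s h w) a = s * Real.exp (-(2 * h / π * arg ((1 + w) / (1 - w)))) := by
  rw [discToAnnulus, dist_eq_norm, add_sub_cancel_left, norm_mul, norm_real,
    Real.norm_of_nonneg hs, norm_exp]
  simp [mul_re, log_im]

theorem mapsTo_discToAnnulus (a : ℂ) {s h : ℝ} (hs : 0 ≤ s) (hh : 0 ≤ h) :
    MapsTo (discToAnnulus a s h) (ball 0 1)
      (closedAnnulus a (s * Real.exp (-h)) (s * Real.exp h)) := by
  intro w hw
  have harg : |arg ((1 + w) / (1 - w))| < π / 2 :=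
    abs_arg_lt_pi_div_two_iff.mpr (Or.inl (re_one_add_div_one_sub_pos (mem_ball_zero_iff.mp hw)))
  have hbound : |2 * h / π * arg ((1 + w) / (1 - w))| ≤ h := by
    rw [abs_mul, abs_of_nonneg (by positivity)]
    calc 2 * h / π * |arg ((1 + w) / (1 - w))| ≤ 2 * h / π * (π / 2) := by gcongr
      _ = h := by field_simp
  obtain ⟨hlo, hhi⟩ := abs_le.mp hbound
  rw [closedAnnulus, mem_ofPred_eq, dist_discToAnnulus a hs]
  constructor
  · gcongr
  · gcongr
    linarith

end Complex

open Complex in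
theorem closedAnnulus_eq_image (a : ℂ) {ε r : ℝ} (hε : 0 ≤ ε) :
    closedAnnulus a ε r =
      (fun p : ℝ × ℝ => a + p.1 * exp (p.2 * I)) '' (Icc ε r ×ˢ univ) := by
  ext z
  constructor
  · rintro ⟨hεz, hzr⟩
    refine ⟨(‖z - a‖, arg (z - a)), ⟨⟨?_, ?_⟩, mem_univ _⟩, ?_⟩
    · rwa [← dist_eq_norm]
    · rwa [← dist_eq_norm]
    · simp only [norm_mul_exp_arg_mul_I, add_sub_cancel]
  · rintro ⟨⟨s, θ⟩, ⟨⟨hεs, hsr⟩, -⟩, rfl⟩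
    have hs : dist (a + s * exp (θ * I)) a = s := by
      rw [dist_eq_norm, add_sub_cancel_left, norm_mul, norm_exp_ofReal_mul_I, mul_one,
        norm_real, Real.norm_of_nonneg (hε.trans hεs)]
    simpa only [closedAnnulus, mem_ofPred_eq, hs] using ⟨hεs, hsr⟩

theorem isPreconnected_closedAnnulus (a : ℂ) {ε r : ℝ} (hε : 0 ≤ ε) :
    IsPreconnected (closedAnnulus a ε r) := by
  rw [closedAnnulus_eq_image a hε]
  exact (isPreconnected_Icc.prod isPreconnected_univ).image _ (by fun_prop)

theorem subset_ball_of_disjoint_closedAnnulus {α : Type*} [PseudoMetricSpace α] {Ω : Set α}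
    {a : α} {ε r : ℝ} (hΩ : IsPreconnected Ω) (ha : a ∈ closure Ω) (hε : 0 < ε) (hεr : ε ≤ r)
    (hdisj : Disjoint Ω (closedAnnulus a ε r)) : Ω ⊆ ball a ε := by
  refine hΩ.subset_left_of_subset_union isOpen_ball isClosed_closedBall.isOpen_compl
    (disjoint_compl_right.mono_left
      (ball_subset_closedBall.trans (closedBall_subset_closedBall hεr)))
    (fun z hz => ?_) ?_
  · have : z ∉ closedAnnulus a ε r := hdisj.notMem_of_mem_left hz
    simp only [closedAnnulus, mem_ofPred_eq, not_and_or, not_le] at this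
    simpa [mem_union, mem_ball, mem_compl_iff, mem_closedBall, not_le] using this
  · obtain ⟨b, hbΩ, hb⟩ := Metric.mem_closure_iff.mp ha ε hε
    exact ⟨b, hbΩ, mem_ball'.mpr hb⟩

theorem closedAnnulus_subset_of_disjoint_frontier {Ω : Set ℂ} {a x : ℂ} {ε r ρ : ℝ}
    (hopen : IsOpen Ω) (hconn : IsPreconnected Ω) (ha : a ∈ frontier Ω) (hball : ball x ρ ⊆ Ω)
    (hε : 0 < ε) (hεr : ε ≤ r) (hερ : ε < ρ) (hA : Disjoint (closedAnnulus a ε r) (frontier Ω)) :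
    closedAnnulus a ε r ⊆ Ω := by
  refine (isPreconnected_closedAnnulus a hε.le).subset_of_closure_inter_subset hopen ?_ ?_
  · by_contra hempty
    rw [not_nonempty_iff_eq_empty, ← disjoint_iff_inter_eq_empty] at hempty
    have hsub := subset_ball_of_disjoint_closedAnnulus hconn (frontier_subset_closure ha) hε hεr
      hempty.symm
    have hdiam := diam_mono (hball.trans hsub) isBounded_ball
    rw [diam_ball_eq x (hε.trans hερ).le, diam_ball_eq a hε.le] at hdiam
    linarith
  · rintro z ⟨hzcl, hzA⟩
    by_contra hzΩ
    exact hA.notMem_of_mem_left hzA (hopen.frontier_eq ▸ ⟨hzcl, hzΩ⟩)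

theorem half_le_infDist_of_disjoint_closedAnnulus {α : Type*} [PseudoMetricSpace α] {E : Set α}
    {a z : α} {ε r : ℝ} (hE : E.Nonempty) (hdisj : Disjoint (closedAnnulus a ε r) E)
    (hε : ε ≤ dist z a / 2) (hr : 3 * dist z a / 2 ≤ r) : dist z a / 2 ≤ infDist z E := by
  refine (le_infDist hE).mpr fun y hy => ?_
  have hyA : y ∉ closedAnnulus a ε r := hdisj.notMem_of_mem_right hy
  simp only [closedAnnulus, mem_ofPred_eq, not_and_or, not_le] at hyA
  have := dist_triangle z y a
  have := dist_triangle y z a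
  rw [dist_comm y z] at this
  rcases hyA with h | h <;> linarith

open Real in
theorem log_log_one_div_le {r h δ : ℝ} (hr : 0 < r) (hδ : r * exp (-h) / 2 ≤ δ) (hδ1 : δ < 1)
    (hsum : 1 + h + log (1 / r) ≤ log (1 / r) ^ 2) :
    log (log (1 / δ)) ≤ 2 * log (log (1 / r)) := by
  have hδ0 : 0 < δ := lt_of_lt_of_le (by positivity) hδ
  have hlog_pos : 0 < log (1 / δ) := log_pos (by rw [lt_div_iff₀ hδ0]; linarith)
  have hinv : 1 / δ ≤ 2 * exp h * (1 / r) := by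
    calc 1 / δ ≤ 1 / (r * exp (-h) / 2) := one_div_le_one_div_of_le (by positivity) hδ
      _ = 2 * exp h * (1 / r) := by rw [exp_neg]; field_simp
  have hlog : log (1 / δ) ≤ log (1 / r) ^ 2 :=
    calc log (1 / δ) ≤ log (2 * exp h * (1 / r)) := log_le_log (by positivity) hinv
      _ = log 2 + h + log (1 / r) := by
        rw [log_mul (by positivity) (by positivity), log_mul two_ne_zero (exp_pos h).ne', log_exp]
      _ ≤ log (1 / r) ^ 2 := by linarith [log_two_lt_d9]
  calc log (log (1 / δ)) ≤ log (log (1 / r) ^ 2) := log_le_log hlog_pos hlog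
    _ = 2 * log (log (1 / r)) := by rw [log_pow]; norm_num

open Real in
theorem mul_le_pi_mul_log_log_of_closedAnnulus_subset {Ω : Set ℂ} {a : ℂ} {M δ₀ r h : ℝ}
    (hopen : IsOpen Ω) (ha : a ∈ frontier Ω) (hM : 0 < M) (hr : 0 < r) (hr1 : r < 1)
    (hrδ₀ : r < δ₀) (hh : log 2 ≤ h) (hsum : 1 + h + log (1 / r) ≤ log (1 / r) ^ 2)
    (hρ : PoincareDensityLowerBound Ω M δ₀)
    (hA : closedAnnulus a (r * exp (-(2 * h))) r ⊆ Ω) :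
    M * h ≤ π * log (log (1 / r)) := by
  have hh0 : 0 < h := (log_pos one_lt_two).trans_le hh
  set s := r * exp (-h) with hs_def
  have hs : 0 < s := by positivity
  have hsr : s < r := mul_lt_of_lt_one_right hr (Real.exp_lt_one_iff.mpr (by linarith))
  have hexp : 2 ≤ exp h := (exp_log two_pos).symm.le.trans (exp_le_exp.mpr hh)
  have hA' : closedAnnulus a (s * exp (-h)) (s * exp h) ⊆ Ω := by
    have hinner : s * exp (-h) = r * exp (-(2 * h)) := by
      rw [hs_def, mul_assoc, ← exp_add]; ring_nf
    have houter : s * exp h = r := by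
      rw [hs_def, mul_assoc, ← exp_add, neg_add_cancel, exp_zero, mul_one]
    rwa [hinner, houter]
  have hdisj : Disjoint (closedAnnulus a (s * exp (-h)) (s * exp h)) (frontier Ω) :=
    (disjoint_frontier_iff_isOpen.mpr hopen).symm.mono_left hA'
  have hz : dist (a + s) a = s := by
    rw [dist_eq_norm, add_sub_cancel_left, Complex.norm_real, Real.norm_of_nonneg hs.le]
  have hzΩ : a + s ∈ Ω := hA'
    ⟨by rw [hz]; exact mul_le_of_le_one_right hs.le (by simpa using hh0.le),
      by rw [hz]; exact le_mul_of_one_le_right hs.le (by linarith)⟩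
  set δ := infDist (a + s) (frontier Ω)
  have hδs : δ ≤ s := hz ▸ infDist_le_dist_of_mem ha
  have hsδ : s / 2 ≤ δ := hz ▸ half_le_infDist_of_disjoint_closedAnnulus ⟨a, ha⟩ hdisj
    (by rw [hz, exp_neg, div_eq_mul_inv]; gcongr) (by rw [hz]; nlinarith)
  have hderiv := hρ (a + s) hzΩ (by linarith) _ (Complex.differentiableOn_discToAnnulus a s h)
    ((Complex.mapsTo_discToAnnulus a hs.le hh0.le).mono_right hA')
    (Complex.discToAnnulus_zero a s h)
  rw [Complex.norm_deriv_discToAnnulus_zero a hs.le hh0.le] at hderiv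
  -- `0 ≤ ‖f'(0)‖` already forces the `log log` factor to be nonnegative.
  have hL : 0 ≤ log (log (1 / δ)) :=
    nonneg_of_mul_nonneg_right ((by positivity : 0 ≤ 4 * h * s / π).trans hderiv)
      (mul_pos (div_pos two_pos hM) (by linarith))
  have key : 4 * h * s / π ≤ 2 / M * s * (2 * log (log (1 / r))) :=
    hderiv.trans (by gcongr; exact log_log_one_div_le hr hsδ (by linarith) hsum)
  field_simp at key
  linarith

open Real in
theorem mul_le_two_pi_of_closedAnnulus_subset {Ω : Set ℂ} {a : ℂ} {M δ₀ r β : ℝ}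
    (hopen : IsOpen Ω) (ha : a ∈ frontier Ω) (hM : 0 < M) (hr : 0 < r) (hrδ₀ : r < δ₀)
    (hβ : 1 ≤ β) (ht : 4 + β ≤ log (1 / r)) (hρ : PoincareDensityLowerBound Ω M δ₀)
    (hA : closedAnnulus a (r * log (1 / r) ^ (-β)) r ⊆ Ω) :
    M * β ≤ 2 * π := by
  set t := log (1 / r)
  have hlog2 : log 2 ≤ log t / 2 := by
    have hlog4 : log 4 = 2 * log 2 := by
      rw [show (4 : ℝ) = 2 ^ 2 by norm_num, log_pow]; norm_num
    linarith [log_le_log (by norm_num) (by linarith : (4 : ℝ) ≤ t)]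
  have hlogt : 0 < log t := by linarith [log_pos one_lt_two]
  have hlogt_le : log t ≤ t := (log_le_sub_one_of_pos (by linarith)).trans (by linarith)
  have hr1 : r < 1 := (one_lt_div hr).mp ((log_pos_iff (by positivity)).mp (by linarith))
  have hbound := mul_le_pi_mul_log_log_of_closedAnnulus_subset (h := β / 2 * log t) hopen ha hM hr
    hr1 hrδ₀ (by nlinarith) (by nlinarith) hρ
    (by rwa [rpow_def_of_pos (by linarith), show log t * -β = -(2 * (β / 2 * log t)) by ring] at hA)
  nlinarith

theorem stmt_6 (Ω : Set ℂ) (hopen : IsOpen Ω) (hconn : IsConnected Ω)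
    (M δ₀ : ℝ) (hM : 0 < M) (hδ₀ : δ₀ ∈ Set.Ioo (0 : ℝ) (Real.exp 1)⁻¹)
    (hρ : ∀ z ∈ Ω, infDist z (frontier Ω) < δ₀ →
      ∀ f : ℂ → ℂ, DifferentiableOn ℂ f (ball (0 : ℂ) 1) →
        MapsTo f (ball (0 : ℂ) 1) Ω → f 0 = z →
          ‖deriv f 0‖ ≤
            (2 / M) * infDist z (frontier Ω) *
              Real.log (Real.log (1 / infDist z (frontier Ω)))) :
    ∃ β > (0 : ℝ), CondU2 (frontier Ω) β := by
  obtain ⟨x₀, ρ₀, hρ₀, hball⟩ : ∃ x₀, ∃ ρ₀ > 0, ball x₀ ρ₀ ⊆ Ω := by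
    obtain ⟨x₀, hx₀⟩ := hconn.nonempty
    exact ⟨x₀, isOpen_iff.mp hopen x₀ hx₀⟩
  set β := 1 + 2 * π / M with hβ_def
  have hβ : 1 ≤ β := le_add_of_nonneg_right (by positivity)
  refine ⟨β, by positivity, 1, one_pos, min (min δ₀ (Real.exp (-(4 + β)))) ρ₀,
    lt_min (lt_min hδ₀.1 (Real.exp_pos _)) hρ₀, ?_⟩
  rintro a ha r ⟨hr, hrr₀⟩
  obtain ⟨⟨hrδ₀, hr_exp⟩, hrρ₀⟩ : (r < δ₀ ∧ r < Real.exp (-(4 + β))) ∧ r < ρ₀ := by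
    simpa only [lt_min_iff] using hrr₀
  have ht : 4 + β ≤ Real.log (1 / r) := by
    have := Real.log_lt_log hr hr_exp
    rw [Real.log_exp] at this
    rw [one_div, Real.log_inv]
    linarith
  rw [one_mul]
  change (closedAnnulus a (r * Real.log (1 / r) ^ (-β)) r ∩ frontier Ω).Nonempty
  have hε : 0 < r * Real.log (1 / r) ^ (-β) := mul_pos hr (Real.rpow_pos_of_pos (by linarith) _)
  have hεr : r * Real.log (1 / r) ^ (-β) ≤ r :=
    mul_le_of_le_one_right hr.le (Real.rpow_le_one_of_one_le_of_nonpos (by linarith) (by linarith))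
  by_contra hempty
  rw [not_nonempty_iff_eq_empty, ← disjoint_iff_inter_eq_empty] at hempty
  have hA := closedAnnulus_subset_of_disjoint_frontier hopen hconn.isPreconnected ha hball hε hεr
    (hεr.trans_lt hrρ₀) hempty
  have hMβ := mul_le_two_pi_of_closedAnnulus_subset hopen ha hM hr hrδ₀ hβ ht hρ hA
  rw [hβ_def, mul_add, mul_one, mul_div_cancel₀ _ hM.ne'] at hMβ
  linarith
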